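/- arXiv:2012.12795 — 3 statements merged into one kernel-verified Lean document; each statement's English description precedes it below -/
import Mathlib

section
/- For fixed p ∈ (0,1) and α ∈ (0,1), the function k ↦ m(k, p, α) (the binomial quantile at level α of Binomial(k, p)) is monotone non-decreasing in k and increases by at most 1 at each step: m(k+1, p, α) ≤ m(k, p, α) + 1. In other words, every legal mTable is valid. -/
/-- Binomial CDF: F(m; i, p) = ∑_{j=0}^m C(i,j) p^j (1-p)^{i-j}. -/
noncomputable def binCDF (i : ℕ) (p : ℝ) (m : ℕ) : ℝ :=
  ∑ j ∈ Finset.range (m + 1), (i.choose j : ℝ) * p ^ j * (1 - p) ^ (i - j)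

/-- Binomial quantile: least m with F(m; i, p) ≥ α. -/
noncomputable def quantile (i : ℕ) (p α : ℝ) : ℕ :=
  sInf {m : ℕ | α ≤ binCDF i p m}

lemma term_rec (p : ℝ) (i j : ℕ) :
    ((i+1).choose (j+1) : ℝ) * p ^ (j+1) * (1 - p) ^ (i + 1 - (j+1)) =
    (1 - p) * ((i.choose (j+1) : ℝ) * p ^ (j+1) * (1 - p) ^ (i - (j+1))) +
    p * ((i.choose j : ℝ) * p ^ j * (1 - p) ^ (i - j)) := by
  rcases lt_trichotomy j i with h | h | h
  · have h1 : i + 1 - (j+1) = i - j := by omega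
    have h2 : i - j = (i - (j+1)) + 1 := by omega
    rw [h1, h2, Nat.choose_succ_succ]
    push_cast
    ring
  · subst h
    have h1 : j + 1 - (j+1) = 0 := by omega
    have h2 : j - (j+1) = 0 := by omega
    have h3 : j - j = 0 := by omega
    rw [h1, h2, h3, Nat.choose_self, Nat.choose_succ_self, Nat.choose_self]
    push_cast
    ring
  · have h1 : (i+1).choose (j+1) = 0 := Nat.choose_eq_zero_of_lt (by omega)
    have h2 : i.choose (j+1) = 0 := Nat.choose_eq_zero_of_lt (by omega)
    have h3 : i.choose j = 0 := Nat.choose_eq_zero_of_lt h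
    simp [h1, h2, h3]

lemma binCDF_rec (p : ℝ) (i m : ℕ) :
    binCDF (i+1) p (m+1) = (1 - p) * binCDF i p (m+1) + p * binCDF i p m := by
  unfold binCDF
  rw [Finset.sum_range_succ' (fun j => ((i+1).choose j : ℝ) * p ^ j * (1 - p) ^ (i + 1 - j)) (m+1),
      Finset.sum_range_succ' (fun j => (i.choose j : ℝ) * p ^ j * (1 - p) ^ (i - j)) (m+1)]
  have := fun j (_ : j ∈ Finset.range (m+1)) => term_rec p i j
  rw [Finset.sum_congr rfl this, Finset.sum_add_distrib, ← Finset.mul_sum, ← Finset.mul_sum]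
  simp only [Nat.choose_zero_right, Nat.cast_one, pow_zero, Nat.sub_zero]
  ring

lemma binCDF_mono_m (p : ℝ) (hp0 : 0 ≤ p) (hp1 : p ≤ 1) (i m : ℕ) :
    binCDF i p m ≤ binCDF i p (m+1) := by
  unfold binCDF
  nth_rewrite 2 [Finset.sum_range_succ]
  have h1 : (0:ℝ) ≤ 1 - p := by linarith
  have : (0:ℝ) ≤ (i.choose (m+1) : ℝ) * p ^ (m+1) * (1 - p) ^ (i - (m+1)) := by positivity
  linarith

lemma binCDF_succ_le (p : ℝ) (hp0 : 0 ≤ p) (hp1 : p ≤ 1) (i m : ℕ) :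
    binCDF (i+1) p m ≤ binCDF i p m := by
  have h1 : (0:ℝ) ≤ 1 - p := by linarith
  cases m with
  | zero =>
    simp only [binCDF, zero_add, Finset.sum_range_one, Nat.choose_zero_right, Nat.cast_one,
      pow_zero, Nat.sub_zero, one_mul]
    calc (1-p)^(i+1) = (1-p)^i * (1-p) := by ring
    _ ≤ (1-p)^i * 1 := by
        apply mul_le_mul_of_nonneg_left (by linarith) (by positivity)
    _ = (1-p)^i := by ring
  | succ m =>
    rw [binCDF_rec]
    have hm := binCDF_mono_m p hp0 hp1 i m
    nlinarith

lemma le_binCDF_succ (p : ℝ) (hp0 : 0 ≤ p) (hp1 : p ≤ 1) (i m : ℕ) :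
    binCDF i p m ≤ binCDF (i+1) p (m+1) := by
  rw [binCDF_rec]
  have hm := binCDF_mono_m p hp0 hp1 i m
  have h1 : (0:ℝ) ≤ 1 - p := by linarith
  nlinarith

lemma binCDF_self (p : ℝ) (i : ℕ) : binCDF i p i = 1 := by
  have := add_pow p (1 - p) i
  have h2 : binCDF i p i = (p + (1 - p)) ^ i := by
    rw [this, binCDF]
    exact Finset.sum_congr rfl (fun j _ => by ring)
  rw [h2]
  norm_num

/-- Every legal mTable is valid: k ↦ m(k,p,α) is non-decreasing and increases
by at most 1 at each step. -/
theorem quantile_mono_k_step_le_one (p α : ℝ) (hp0 : 0 < p) (hp1 : p < 1)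
    (hα0 : 0 < α) (hα1 : α < 1) (k : ℕ) :
    quantile k p α ≤ quantile (k + 1) p α ∧
    quantile (k + 1) p α ≤ quantile k p α + 1 := by
  have hp0' : (0:ℝ) ≤ p := le_of_lt hp0
  have hp1' : p ≤ 1 := le_of_lt hp1
  have hne : ∀ i : ℕ, {m : ℕ | α ≤ binCDF i p m}.Nonempty := by
    intro i
    exact ⟨i, by rw [Set.mem_setOf_eq, binCDF_self]; linarith⟩
  constructor
  · have hmem : quantile (k+1) p α ∈ {m : ℕ | α ≤ binCDF (k+1) p m} :=
      Nat.sInf_mem (hne (k+1))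
    apply Nat.sInf_le
    have := binCDF_succ_le p hp0' hp1' k (quantile (k+1) p α)
    exact le_trans hmem this
  · have hmem : quantile k p α ∈ {m : ℕ | α ≤ binCDF k p m} :=
      Nat.sInf_mem (hne k)
    apply Nat.sInf_le
    have := le_binCDF_succ p hp0' hp1' k (quantile k p α)
    exact le_trans hmem this
end

section
/- For fixed k ∈ ℕ and p ∈ (0,1), if two significance levels α₁, α₂ ∈ (0,1) produce mTables (m(1,p,α₁),…,m(k,p,α₁)) and (m(1,p,α₂),…,m(k,p,α₂)) with equal mass (sum of entries), then the two mTables are equal as vectors. -/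
lemma binCDF_total (i : ℕ) (p : ℝ) : binCDF i p i = 1 := by
  have h := add_pow p (1 - p) i
  simp only [add_sub_cancel, one_pow] at h
  unfold binCDF
  conv_rhs => rw [h]
  exact Finset.sum_congr rfl fun j _ => by ring

lemma quantile_nonempty (i : ℕ) (p α : ℝ) (hα : α ≤ 1) :
    {m : ℕ | α ≤ binCDF i p m}.Nonempty :=
  ⟨i, by simpa [binCDF_total] using hα⟩

lemma quantile_mono (i : ℕ) (p α₁ α₂ : ℝ) (h : α₁ ≤ α₂) (hα₂ : α₂ ≤ 1) :
    quantile i p α₁ ≤ quantile i p α₂ := by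
  have hne := quantile_nonempty i p α₂ hα₂
  have hmem := Nat.sInf_mem hne
  exact Nat.sInf_le (le_trans h hmem)

/-- mTable-mass injection: equal masses imply equal mTables. -/
theorem mTable_mass_injective (k : ℕ) (p α₁ α₂ : ℝ) (hp0 : 0 < p) (hp1 : p < 1)
    (hα₁ : α₁ ∈ Set.Ioo (0 : ℝ) 1) (hα₂ : α₂ ∈ Set.Ioo (0 : ℝ) 1)
    (hmass : ∑ i ∈ Finset.Icc 1 k, quantile i p α₁ = ∑ i ∈ Finset.Icc 1 k, quantile i p α₂) :
    ∀ i ∈ Finset.Icc 1 k, quantile i p α₁ = quantile i p α₂ := by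
  rcases le_total α₁ α₂ with h | h
  · have hle : ∀ i ∈ Finset.Icc 1 k, quantile i p α₁ ≤ quantile i p α₂ :=
      fun i _ => quantile_mono i p α₁ α₂ h hα₂.2.le
    exact fun i hi => ((Finset.sum_eq_sum_iff_of_le hle).mp hmass i hi)
  · have hle : ∀ i ∈ Finset.Icc 1 k, quantile i p α₂ ≤ quantile i p α₁ :=
      fun i _ => quantile_mono i p α₂ α₁ h hα₁.2.le
    exact fun i hi => ((Finset.sum_eq_sum_iff_of_le hle).mp hmass.symm i hi).symm
end

section
/- Let b(1),…,b(M) be positive integers, p ∈ (0,1), and define recursively S(M+1, c) = 1 and S(ℓ, c) = ∑_{x = max(ℓ−c, 0)}^{b(ℓ)} C(b(ℓ), x) p^x (1−p)^{b(ℓ)−x} · S(ℓ+1, c+x) for 1 ≤ ℓ ≤ M and c ∈ ℕ. Then S(1, 0) = P(∀ℓ ≤ M: ∑_{j=1}^{ℓ} X_j ≥ ℓ), where X_j ~ Binomial(b(j), p) are independent. -/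
open MeasureTheory

/-- The Binomial(n, p) distribution as a measure on ℕ. -/
noncomputable def binMeasure (n : ℕ) (p : ℝ) : Measure ℕ :=
  Measure.sum fun x : ℕ =>
    (ENNReal.ofReal ((n.choose x : ℝ) * p ^ x * (1 - p) ^ (n - x))) • Measure.dirac x

/-- The dynamic-programming recursion: S over remaining blocks, with ℓ the current
(1-based) block index and c the number of protected candidates assigned so far. -/
noncomputable def Srec (p : ℝ) : List ℕ → ℕ → ℕ → ℝ
  | [], _, _ => 1
  | bl :: rest, ℓ, c =>
      ∑ x ∈ Finset.Icc (ℓ - c) bl,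
        (bl.choose x : ℝ) * p ^ x * (1 - p) ^ (bl - x) * Srec p rest (ℓ + 1) (c + x)

lemma Srec_nonneg {p : ℝ} (hp0 : 0 ≤ p) (hp1 : p ≤ 1) :
    ∀ (bl : List ℕ) (ℓ c : ℕ), 0 ≤ Srec p bl ℓ c
  | [], _, _ => by simp [Srec]
  | b0 :: rest, ℓ, c => by
      rw [Srec]
      apply Finset.sum_nonneg
      intro x _
      have h1 : (0:ℝ) ≤ 1 - p := by linarith
      have := Srec_nonneg hp0 hp1 rest (ℓ+1) (c+x)
      positivity

lemma sum_filter_succ {M : ℕ} (ω : Fin (M+1) → ℕ) (k : Fin M) :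
    ∑ j ∈ Finset.univ.filter (· ≤ k.succ), ω j
      = ω 0 + ∑ j ∈ Finset.univ.filter (· ≤ k), ω (Fin.succ j) := by
  rw [Finset.sum_filter, Fin.sum_univ_succ, Finset.sum_filter]
  simp [Fin.succ_le_succ_iff, Fin.zero_le]

lemma binMeasure_lintegral (n : ℕ) (p : ℝ) (f : ℕ → ENNReal) :
    ∫⁻ x, f x ∂ binMeasure n p
      = ∑' x : ℕ, ENNReal.ofReal ((n.choose x : ℝ) * p ^ x * (1 - p) ^ (n - x)) * f x := by
  simp [binMeasure, lintegral_sum_measure, lintegral_smul_measure, lintegral_dirac]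

lemma binMeasure_apply (n : ℕ) (p : ℝ) (s : Set ℕ) :
    binMeasure n p s
      = ∑' x : ℕ, ENNReal.ofReal ((n.choose x : ℝ) * p ^ x * (1 - p) ^ (n - x)) * s.indicator 1 x := by
  rw [← lintegral_indicator_one (Set.to_countable s).measurableSet, binMeasure_lintegral]

lemma binMeasure_prob (n : ℕ) (p : ℝ) (hp0 : 0 ≤ p) (hp1 : p ≤ 1) :
    IsProbabilityMeasure (binMeasure n p) := by
  constructor
  rw [binMeasure_apply]
  simp only [Set.indicator_univ, Pi.one_apply, mul_one]
  rw [tsum_eq_sum (s := Finset.range (n+1)) (by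
    intro x hx
    simp only [Finset.mem_range, not_lt] at hx
    rw [Nat.choose_eq_zero_of_lt hx]
    simp)]
  rw [← ENNReal.ofReal_sum_of_nonneg (by
    intro i _
    have h1 : (0:ℝ) ≤ 1 - p := by linarith
    positivity)]
  have := add_pow p (1-p) n
  simp only [add_sub_cancel, one_pow] at this
  rw [show ∑ x ∈ Finset.range (n+1), (n.choose x : ℝ) * p ^ x * (1 - p) ^ (n - x)
      = ∑ x ∈ Finset.range (n+1), p ^ x * (1-p) ^ (n-x) * (n.choose x) by
    apply Finset.sum_congr rfl; intros; ring, ← this]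
  simp

lemma key (p : ℝ) (hp0 : 0 < p) (hp1 : p < 1) :
    ∀ (M : ℕ) (b : Fin M → ℕ) (ℓ c : ℕ),
    ENNReal.ofReal (Srec p (List.ofFn b) ℓ c)
      = Measure.pi (fun i => binMeasure (b i) p)
          {ω : Fin M → ℕ | ∀ k : Fin M,
            ℓ + (k : ℕ) ≤ c + ∑ j ∈ Finset.univ.filter (· ≤ k), ω j}
  | 0, b, ℓ, c => by
      haveI : ∀ n : ℕ, IsProbabilityMeasure (binMeasure n p) :=
        fun n => binMeasure_prob n p hp0.le hp1.le
      have hs : {ω : Fin 0 → ℕ | ∀ k : Fin 0,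
          ℓ + (k : ℕ) ≤ c + ∑ j ∈ Finset.univ.filter (· ≤ k), ω j} = Set.univ := by
        ext ω; simpa using fun k : Fin 0 => k.elim0
      rw [hs, measure_univ]
      simp [List.ofFn_zero, Srec]
  | (M+1), b, ℓ, c => by
      haveI : ∀ n : ℕ, IsProbabilityMeasure (binMeasure n p) :=
        fun n => binMeasure_prob n p hp0.le hp1.le
      have h1 : (0:ℝ) ≤ 1 - p := by linarith
      set B : Set (ℕ × (Fin M → ℕ)) := {q | ℓ ≤ c + q.1 ∧ ∀ k : Fin M,
          (ℓ+1) + (k : ℕ) ≤ (c + q.1) + ∑ j ∈ Finset.univ.filter (· ≤ k), q.2 j} with hB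
      have hBmeas : MeasurableSet B := by
        have hBeq : B = {q : ℕ × (Fin M → ℕ) | ℓ ≤ c + q.1} ∩
            ⋂ k : Fin M, {q : ℕ × (Fin M → ℕ) |
              (ℓ+1) + (k : ℕ) ≤ (c + q.1) + ∑ j ∈ Finset.univ.filter (· ≤ k), q.2 j} := by
          ext q; simp [hB, Set.mem_iInter]
        rw [hBeq]
        apply MeasurableSet.inter
        · exact (Set.to_countable _).measurableSet.preimage
            (measurable_const.add measurable_fst)
        · apply MeasurableSet.iInter
          intro k
          exact (Set.to_countable _).measurableSet.preimage
            ((measurable_const.add measurable_fst).add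
              (Finset.measurable_sum _ (fun j _ => (measurable_pi_apply j).comp measurable_snd)))
      have hmp := measurePreserving_piFinSuccAbove
        (fun i : Fin (M+1) => binMeasure (b i) p) 0
      have hf0 : Finset.univ.filter (· ≤ (0 : Fin (M+1))) = {0} := by
        ext j; simp [Fin.le_zero_iff]
      have hpre : {ω : Fin (M+1) → ℕ | ∀ k : Fin (M+1),
            ℓ + (k : ℕ) ≤ c + ∑ j ∈ Finset.univ.filter (· ≤ k), ω j}
          = (MeasurableEquiv.piFinSuccAbove (fun _ : Fin (M+1) => ℕ) 0) ⁻¹' B := by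
        ext ω
        simp only [Set.mem_preimage, Set.mem_setOf_eq, hB,
          MeasurableEquiv.piFinSuccAbove_apply, Fin.insertNthEquiv_zero,
          Fin.consEquiv_symm_apply, Fin.tail]
        rw [Fin.forall_fin_succ]
        apply and_congr
        · rw [hf0, Finset.sum_singleton]
          simp
        · refine forall_congr' fun k => ?_
          rw [sum_filter_succ]
          simp only [Fin.val_succ]
          constructor <;> intro h <;> omega
      rw [hpre, hmp.measure_preimage hBmeas.nullMeasurableSet]
      simp only [Fin.zero_succAbove]
      rw [Measure.prod_apply hBmeas, binMeasure_lintegral]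
      have hslice : ∀ x : ℕ,
          (Measure.pi fun j : Fin M => binMeasure (b (Fin.succ j)) p) (Prod.mk x ⁻¹' B)
          = if ℓ ≤ c + x then
              ENNReal.ofReal (Srec p (List.ofFn fun j : Fin M => b (Fin.succ j)) (ℓ+1) (c+x))
            else 0 := by
        intro x
        by_cases hx : ℓ ≤ c + x
        · rw [if_pos hx]
          have hset : Prod.mk x ⁻¹' B = {ω : Fin M → ℕ | ∀ k : Fin M,
              (ℓ+1) + (k : ℕ) ≤ (c + x) + ∑ j ∈ Finset.univ.filter (· ≤ k), ω j} := by
            ext ω; simp [hB, hx]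
          rw [hset]
          exact (key p hp0 hp1 M (fun j => b (Fin.succ j)) (ℓ+1) (c+x)).symm
        · rw [if_neg hx]
          have hset : Prod.mk x ⁻¹' B = ∅ := by
            ext ω; simp [hB, hx]
          simp [hset]
      simp only [hslice]
      rw [tsum_eq_sum (s := Finset.Icc (ℓ - c) (b 0)) (by
        intro x hx
        simp only [Finset.mem_Icc, not_and_or, not_le] at hx
        rcases hx with h | h
        · rw [if_neg (by omega), mul_zero]
        · rw [Nat.choose_eq_zero_of_lt h]
          simp)]
      rw [List.ofFn_succ, Srec, ENNReal.ofReal_sum_of_nonneg (by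
        intro x _
        have := Srec_nonneg hp0.le hp1.le (List.ofFn fun j : Fin M => b (Fin.succ j)) (ℓ+1) (c+x)
        positivity)]
      apply Finset.sum_congr rfl
      intro x hx
      simp only [Finset.mem_Icc] at hx
      rw [if_pos (by omega), ENNReal.ofReal_mul (by positivity)]


/-- Correctness of the DP algorithm: S(1, 0) equals the success probability
P(∀ℓ ≤ M: ∑_{j=1}^ℓ X_j ≥ ℓ) for independent X_j ~ Bin(b j, p). -/
theorem Srec_eq_success_prob (M : ℕ) (b : Fin M → ℕ) (hb : ∀ j, 1 ≤ b j)
    (p : ℝ) (hp0 : 0 < p) (hp1 : p < 1) :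
    ENNReal.ofReal (Srec p (List.ofFn b) 1 0)
      = Measure.pi (fun j => binMeasure (b j) p)
          {ω : Fin M → ℕ | ∀ ℓ : Fin M, (ℓ : ℕ) + 1 ≤ ∑ j ∈ Finset.univ.filter (· ≤ ℓ), ω j} := by
  rw [key p hp0 hp1 M b 1 0]
  congr 1
  ext ω
  simp [add_comm]
end
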